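/- arXiv:2412.18595 — 3 statements merged into one kernel-verified Lean document; each statement's English description precedes it below -/
import Mathlib

section
/- For any connected graph G and any edge e of G, the basis number of the contraction G/e is at most the basis number of G. -/
open scoped Classical

noncomputable section

/-- Helper: quotients of finite types are finite. -/
noncomputable def quotFintype {α : Type} [Fintype α] (r : α → α → Prop) : Fintype (Quot r) :=
  Fintype.ofSurjective (Quot.mk r) fun q => Quot.exists_rep q

/-- A finite multigraph.  Each edge `e` carries an (arbitrarily chosen) ordering of its two
endpoints, `fst e` and `snd e`; a loop is an edge with `fst e = snd e`. -/
structure Multigraph where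
  V : Type
  E : Type
  fintV : Fintype V
  fintE : Fintype E
  fst : E → V
  snd : E → V

attribute [instance] Multigraph.fintV Multigraph.fintE

namespace Multigraph

variable (G : Multigraph)

/-- Incidence of a vertex and an edge, modulo 2 (a loop is incident twice, i.e. 0 mod 2). -/
noncomputable def inc (v : G.V) (e : G.E) : ZMod 2 :=
  (if G.fst e = v then 1 else 0) + (if G.snd e = v then 1 else 0)

/-- The cycle space of `G` over `F_2`: characteristic vectors of edge sets in which every
vertex has even degree (i.e. Eulerian subgraphs), with addition = symmetric difference. -/
noncomputable def cycleSpace : Submodule (ZMod 2) (G.E → ZMod 2) where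
  carrier := {x | ∀ v : G.V, ∑ e : G.E, G.inc v e * x e = 0}
  zero_mem' := by intro v; simp
  add_mem' := by
    intro a b ha hb v
    have h : ∀ e : G.E, G.inc v e * (a + b) e = G.inc v e * a e + G.inc v e * b e := by
      intro e
      show G.inc v e * (a e + b e) = G.inc v e * a e + G.inc v e * b e
      ring
    rw [Finset.sum_congr rfl fun e _ => h e, Finset.sum_add_distrib, ha v, hb v, add_zero]
  smul_mem' := by
    intro c x hx v
    have h : ∀ e : G.E, G.inc v e * (c • x) e = c * (G.inc v e * x e) := by
      intro e
      show G.inc v e * (c * x e) = c * (G.inc v e * x e)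
      ring
    rw [Finset.sum_congr rfl fun e _ => h e, ← Finset.mul_sum, hx v, mul_zero]

/-- The charge of an edge `e` with respect to a collection `B` of (characteristic vectors of)
subgraphs: the number of members of `B` containing `e`. -/
noncomputable def charge (B : Finset (G.E → ZMod 2)) (e : G.E) : ℕ :=
  (B.filter fun x => x e ≠ 0).card

/-- `B` is a basis of the cycle space of `G`. -/
def IsCycleBasis (B : Finset (G.E → ZMod 2)) : Prop :=
  (∀ x ∈ B, x ∈ G.cycleSpace) ∧
    LinearIndependent (ZMod 2) (fun x : B => (x : G.E → ZMod 2)) ∧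
    Submodule.span (ZMod 2) (B : Set (G.E → ZMod 2)) = G.cycleSpace

/-- `B` is a `k`-basis: a basis of the cycle space in which every edge has charge at most `k`. -/
def IsKBasis (k : ℕ) (B : Finset (G.E → ZMod 2)) : Prop :=
  G.IsCycleBasis B ∧ ∀ e : G.E, G.charge B e ≤ k

/-- The basis number of `G`: the least `k` such that `G` has a `k`-basis. -/
noncomputable def basisNum : ℕ := sInf {k | ∃ B, G.IsKBasis k B}

/-- Adjacency of two vertices. -/
def Adj (a b : G.V) : Prop :=
  ∃ e : G.E, (G.fst e = a ∧ G.snd e = b) ∨ (G.fst e = b ∧ G.snd e = a)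

/-- Connectivity. -/
def Connected : Prop :=
  Nonempty G.V ∧ ∀ a b : G.V, Relation.ReflTransGen G.Adj a b

/-- Degree of a vertex (a loop counts twice). -/
noncomputable def degree (v : G.V) : ℕ :=
  ∑ e : G.E, ((if G.fst e = v then 1 else 0) + (if G.snd e = v then 1 else 0))

/-- The subgraph with the same vertex set and edge set restricted to `S`. -/
noncomputable def edgeRestrict (S : Set G.E) : Multigraph where
  V := G.V
  E := S
  fintV := G.fintV
  fintE := (Set.toFinite S).fintype
  fst := fun e => G.fst e.1
  snd := fun e => G.snd e.1

/-- Deletion of a vertex (and all edges incident with it). -/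
noncomputable def deleteVertex (v : G.V) : Multigraph where
  V := {u : G.V // u ≠ v}
  E := {e : G.E // G.fst e ≠ v ∧ G.snd e ≠ v}
  fintV := by classical exact inferInstance
  fintE := by classical exact inferInstance
  fst := fun e => ⟨G.fst e.1, e.2.1⟩
  snd := fun e => ⟨G.snd e.1, e.2.2⟩

/-- `G` is 2-connected: at least 3 vertices, connected, and no cutvertex. -/
def TwoConnected : Prop :=
  G.Connected ∧ 3 ≤ Nat.card G.V ∧ ∀ v : G.V, (G.deleteVertex v).Connected

/-- A cycle of length `n` in `G`: `n` distinct vertices and `n` distinct edges, with edge `i`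
joining vertex `i` to vertex `i+1` (cyclically). -/
def IsCycleOn (n : ℕ) (vs : Fin n → G.V) (es : Fin n → G.E) : Prop :=
  Function.Injective vs ∧ Function.Injective es ∧
    ∀ i : Fin n,
      (G.fst (es i) = vs i ∧ G.snd (es i) = vs (finRotate n i)) ∨
      (G.fst (es i) = vs (finRotate n i) ∧ G.snd (es i) = vs i)

/-- A path with `n` edges, given by its (distinct) vertices and its edges. -/
def IsPathOn (n : ℕ) (vs : Fin (n + 1) → G.V) (es : Fin n → G.E) : Prop :=
  Function.Injective vs ∧
    ∀ i : Fin n,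
      (G.fst (es i) = vs i.castSucc ∧ G.snd (es i) = vs i.succ) ∨
      (G.fst (es i) = vs i.succ ∧ G.snd (es i) = vs i.castSucc)

/-- `p` is the characteristic vector of (the edge set of) a path from `s` to `t`. -/
def IsPathVec (s t : G.V) (p : G.E → ZMod 2) : Prop :=
  ∃ (n : ℕ) (vs : Fin (n + 1) → G.V) (es : Fin n → G.E),
    G.IsPathOn n vs es ∧ vs 0 = s ∧ vs (Fin.last n) = t ∧
      ∀ f : G.E, p f ≠ 0 ↔ ∃ i, es i = f

/-- Two edges lie in a common block: they are equal, or they lie on a common cycle. -/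
def BlockRel (e f : G.E) : Prop :=
  e = f ∨ ∃ (n : ℕ) (vs : Fin n → G.V) (es : Fin n → G.E),
    1 ≤ n ∧ G.IsCycleOn n vs es ∧ (∃ i, es i = e) ∧ (∃ j, es j = f)

/-- `T` is a spanning tree of `G` (as an edge set): the spanning subgraph with edge set `T`
is connected and has no cycles. -/
def IsSpanningTree (T : Set G.E) : Prop :=
  (G.edgeRestrict T).Connected ∧
    ∀ (n : ℕ) (vs : Fin n → (G.edgeRestrict T).V) (es : Fin n → (G.edgeRestrict T).E),
      (G.edgeRestrict T).IsCycleOn n vs es → n = 0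

/-- Contraction of the edge `e`: identify its two endpoints and delete `e`. -/
noncomputable def contract (e : G.E) : Multigraph where
  V := Quot (fun a b : G.V => a = G.fst e ∧ b = G.snd e)
  E := {f : G.E // f ≠ e}
  fintV := quotFintype _
  fintE := by classical exact inferInstance
  fst := fun f => Quot.mk _ (G.fst f.1)
  snd := fun f => Quot.mk _ (G.snd f.1)

/-- Addition of a (possibly parallel) edge joining `u` and `v`. -/
noncomputable def addEdge (u v : G.V) : Multigraph where
  V := G.V
  E := Option G.E
  fintV := G.fintV
  fintE := inferInstance
  fst := fun o => o.elim u G.fst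
  snd := fun o => o.elim v G.snd

/-- Subdivision of the edge `e`: delete `e` and add a new vertex (`none`) joined to both
endpoints of `e`. -/
noncomputable def subdivide (e : G.E) : Multigraph where
  V := Option G.V
  E := {f : G.E // f ≠ e} ⊕ Bool
  fintV := inferInstance
  fintE := by classical exact inferInstance
  fst := Sum.elim (fun f => some (G.fst f.1))
    (fun b => cond b (some (G.fst e)) (some (G.snd e)))
  snd := Sum.elim (fun f => some (G.snd f.1)) (fun _ => none)

/-- Replacement of the edge `e` of `G` by the graph `H` with terminals `s`, `t`:
delete `e`, take the disjoint union with `H`, and identify the endpoints of `e`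
with the terminals. -/
noncomputable def replaceEdge (e : G.E) (H : Multigraph) (s t : H.V) : Multigraph where
  V := Quot (fun a b : G.V ⊕ H.V =>
        (a = Sum.inl (G.fst e) ∧ b = Sum.inr s) ∨ (a = Sum.inl (G.snd e) ∧ b = Sum.inr t))
  E := {f : G.E // f ≠ e} ⊕ H.E
  fintV := quotFintype _
  fintE := by classical exact inferInstance
  fst := Sum.elim (fun f => Quot.mk _ (Sum.inl (G.fst f.1)))
    (fun f => Quot.mk _ (Sum.inr (H.fst f)))
  snd := Sum.elim (fun f => Quot.mk _ (Sum.inl (G.snd f.1)))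
    (fun f => Quot.mk _ (Sum.inr (H.snd f)))

/-! ### Combinatorial embeddings (rotation systems) and planarity -/

/-- Darts: each edge gives two darts. -/
def Dart : Type := G.E × Bool

noncomputable instance : Fintype G.Dart := inferInstanceAs (Fintype (G.E × Bool))

/-- The vertex at which a dart is based. -/
def dartVertex (d : G.Dart) : G.V := cond d.2 (G.fst d.1) (G.snd d.1)

/-- The involution exchanging the two darts of each edge. -/
def dartFlip : Equiv.Perm G.Dart where
  toFun d := (d.1, !d.2)
  invFun d := (d.1, !d.2)
  left_inv := fun d => by cases d; simp <;> rfl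
  right_inv := fun d => by cases d; simp <;> rfl

/-- `σ` is a rotation system: its orbits are exactly the sets of darts based at a
common vertex. -/
def IsRotation (σ : Equiv.Perm G.Dart) : Prop :=
  ∀ d d' : G.Dart, σ.SameCycle d d' ↔ G.dartVertex d = G.dartVertex d'

/-- The face permutation of a rotation system. -/
def facePerm (σ : Equiv.Perm G.Dart) : Equiv.Perm G.Dart := G.dartFlip.trans σ

/-- The faces of the embedding given by `σ`: orbits of the face permutation. -/
def Faces (σ : Equiv.Perm G.Dart) : Type := Quot (G.facePerm σ).SameCycle

/-- The face containing a given dart. -/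
def faceOf (σ : Equiv.Perm G.Dart) (d : G.Dart) : G.Faces σ := Quot.mk _ d

noncomputable def numFaces (σ : Equiv.Perm G.Dart) : ℕ := Nat.card (G.Faces σ)

noncomputable def numComponents : ℕ := Nat.card (Quot G.Adj)

/-- The number of connected components containing at least one edge. -/
noncomputable def numEdgedComponents : ℕ :=
  Nat.card {c : Quot G.Adj // ∃ e : G.E, Quot.mk G.Adj (G.fst e) = c}

/-- `σ` is a planar (genus zero) embedding, by Euler's formula
(componentwise `V - E + F = 2`, where components without edges contribute one global face). -/
def IsPlanarRotation (σ : Equiv.Perm G.Dart) : Prop :=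
  G.IsRotation σ ∧
    G.numFaces σ + Nat.card G.V = Nat.card G.E + G.numComponents + G.numEdgedComponents

/-- `G` is planar: it admits a genus-zero combinatorial embedding. -/
def IsPlanar : Prop := ∃ σ : Equiv.Perm G.Dart, G.IsPlanarRotation σ

/-- The boundary of a face, as an element of `F_2^E`: the edges having exactly one of
their two darts on the face. -/
noncomputable def faceBoundary (σ : Equiv.Perm G.Dart) (c : G.Faces σ) : G.E → ZMod 2 :=
  fun e => ∑ b : Bool, if G.faceOf σ (e, b) = c then 1 else 0

/-- The vertex `v` lies on the face `c`. -/
def VertexOnFace (σ : Equiv.Perm G.Dart) (v : G.V) (c : G.Faces σ) : Prop :=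
  ∃ d : G.Dart, G.faceOf σ d = c ∧ G.dartVertex d = v

/-- The edge `e` lies on the face `c`. -/
def EdgeOnFace (σ : Equiv.Perm G.Dart) (e : G.E) (c : G.Faces σ) : Prop :=
  ∃ b : Bool, G.faceOf σ (e, b) = c

end Multigraph

/-!
The restriction map `F₂^E → F₂^(E - e)` sends the cycle space of `G` onto that of `G/e`:
the degree of a vertex of `G/e` is the sum of the degrees of its preimages (to which `e`
contributes twice), and an Eulerian subgraph of `G/e` lifts to one of `G` by adding `e` exactly
when the endpoints of `e` have odd degree. So the restriction of a `k`-basis of `G` spans the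
cycle space of `G/e`, and any basis extracted from it is again a `k`-basis, since restriction
never increases the charge of an edge.
-/

namespace Multigraph

open Matrix

variable {G : Multigraph}

section CycleBasis

variable (G) in
def incMatrix : Matrix G.V G.E (ZMod 2) := Matrix.of G.inc

theorem mem_cycleSpace_iff {x : G.E → ZMod 2} :
    x ∈ G.cycleSpace ↔ G.incMatrix *ᵥ x = 0 := by
  rw [funext_iff]
  rfl

theorem exists_isCycleBasis_subset {S : Finset (G.E → ZMod 2)}
    (hS : Submodule.span (ZMod 2) (S : Set (G.E → ZMod 2)) = G.cycleSpace) :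
    ∃ B ⊆ S, G.IsCycleBasis B := by
  obtain ⟨b, hbS, hspan, hind⟩ := exists_linearIndependent (ZMod 2) (S : Set (G.E → ZMod 2))
  obtain ⟨B, rfl⟩ := (S.finite_toSet.subset hbS).exists_finset_coe
  refine ⟨B, Finset.coe_subset.mp hbS, fun x hx => ?_, hind, hspan.trans hS⟩
  exact hS ▸ Submodule.subset_span (hbS hx)

variable (G) in
theorem exists_isKBasis : ∃ k B, G.IsKBasis k B := by
  obtain ⟨B, -, hB⟩ := exists_isCycleBasis_subset (G := G)
    (S := Finset.univ.filter (· ∈ G.cycleSpace)) (by simp)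
  exact ⟨B.card, B, hB, fun _ => Finset.card_filter_le _ _⟩

variable (G) in
theorem exists_isKBasis_basisNum : ∃ B, G.IsKBasis G.basisNum B :=
  Nat.sInf_mem (exists_isKBasis G)

theorem basisNum_le {k : ℕ} {B : Finset (G.E → ZMod 2)} (hB : G.IsKBasis k B) :
    G.basisNum ≤ k :=
  Nat.sInf_le ⟨B, hB⟩

theorem charge_mono {B B' : Finset (G.E → ZMod 2)} (h : B ⊆ B') (f : G.E) :
    G.charge B f ≤ G.charge B' f :=
  Finset.card_le_card (Finset.filter_subset_filter _ h)

end CycleBasis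

section Contract

variable (e : G.E)

def contractVertex (u : G.V) : (G.contract e).V := Quot.mk _ u

theorem contractVertex_fst_eq_snd : contractVertex e (G.fst e) = contractVertex e (G.snd e) :=
  Quot.sound ⟨rfl, rfl⟩

theorem contractVertex_eq_iff {u v : G.V} :
    contractVertex e u = contractVertex e v ↔
      u = v ∨ (u = G.fst e ∧ v = G.snd e) ∨ (u = G.snd e ∧ v = G.fst e) := by
  constructor
  · -- `G.snd e ↦ G.fst e` is a retraction of `G.V` onto the vertices of `G/e`
    intro h
    have := congrArg (Quot.lift (fun v => if v = G.snd e then G.fst e else v)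
      (fun _ _ h => by simp [h.1, h.2])) h
    simp only [contractVertex] at this
    split_ifs at this <;> grind
  · rintro (rfl | ⟨rfl, rfl⟩ | ⟨rfl, rfl⟩)
    · rfl
    · exact contractVertex_fst_eq_snd e
    · exact (contractVertex_fst_eq_snd e).symm

def fiberMatrix : Matrix (G.contract e).V G.V (ZMod 2) :=
  Matrix.of fun w u => if contractVertex e u = w then 1 else 0

theorem fiberMatrix_mul_incMatrix_apply (w : (G.contract e).V) (f : G.E) :
    (fiberMatrix e * G.incMatrix) w f =
      (if contractVertex e (G.fst f) = w then 1 else 0) +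
        (if contractVertex e (G.snd f) = w then 1 else 0) := by
  simp only [fiberMatrix, incMatrix, inc, Matrix.mul_apply, Matrix.of_apply, mul_add, mul_ite,
    mul_one, mul_zero, Finset.sum_add_distrib, Finset.sum_ite_eq, Finset.mem_univ, if_true]

def contractRestrict : (G.E → ZMod 2) →ₗ[ZMod 2] ((G.contract e).E → ZMod 2) :=
  LinearMap.funLeft (ZMod 2) (ZMod 2) Subtype.val

theorem incMatrix_contract_mulVec (x : G.E → ZMod 2) :
    (G.contract e).incMatrix *ᵥ contractRestrict e x =
      fiberMatrix e *ᵥ (G.incMatrix *ᵥ x) := by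
  have he : ∀ w, (fiberMatrix e * G.incMatrix) w e = 0 := fun w => by
    rw [fiberMatrix_mul_incMatrix_apply, contractVertex_fst_eq_snd, CharTwo.add_self_eq_zero]
  ext w
  rw [mulVec_mulVec, mulVec, mulVec, dotProduct, dotProduct,
    Fintype.sum_eq_add_sum_subtype_ne _ e, he, zero_mul, zero_add]
  simp only [fiberMatrix_mul_incMatrix_apply]
  exact Fintype.sum_congr _ _ fun f => rfl

theorem contractRestrict_mem_cycleSpace {x : G.E → ZMod 2} (hx : x ∈ G.cycleSpace) :
    contractRestrict e x ∈ (G.contract e).cycleSpace := by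
  rw [mem_cycleSpace_iff] at hx ⊢
  rw [incMatrix_contract_mulVec, hx, mulVec_zero]

theorem filter_contractVertex_eq (v : G.V) :
    Finset.univ.filter (fun u => contractVertex e u = contractVertex e v) =
      if v = G.fst e ∨ v = G.snd e then {G.fst e, G.snd e} else {v} := by
  ext u
  split_ifs <;> simp only [contractVertex_eq_iff, Finset.mem_filter, Finset.mem_univ, true_and,
    Finset.mem_insert, Finset.mem_singleton] <;> grind

theorem fiberMatrix_mulVec_apply (z : G.V → ZMod 2) (v : G.V) :
    (fiberMatrix e *ᵥ z) (contractVertex e v) =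
      ∑ u ∈ Finset.univ.filter (fun u => contractVertex e u = contractVertex e v), z u := by
  simp only [mulVec, dotProduct, fiberMatrix, Matrix.of_apply, ite_mul, one_mul, zero_mul,
    Finset.sum_filter]

theorem eq_mul_incMatrix_of_fiberMatrix_mulVec_eq_zero {z : G.V → ZMod 2}
    (hz : fiberMatrix e *ᵥ z = 0) (v : G.V) : z v = z (G.fst e) * G.incMatrix v e := by
  have hfiber (v : G.V) :
      ∑ u ∈ Finset.univ.filter (fun u => contractVertex e u = contractVertex e v), z u = 0 :=
    (fiberMatrix_mulVec_apply e z v).symm.trans (congrFun hz _)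
  have hends := hfiber (G.fst e)
  rw [filter_contractVertex_eq, if_pos (Or.inl rfl)] at hends
  have hinc : G.incMatrix v e =
      (if G.fst e = v then 1 else 0) + (if G.snd e = v then 1 else 0) := rfl
  by_cases hv : v = G.fst e ∨ v = G.snd e
  · by_cases hloop : G.fst e = G.snd e
    · rw [← hloop, Finset.pair_eq_singleton, Finset.sum_singleton] at hends
      have hv : v = G.fst e := by grind
      subst hv
      rw [hinc, ← hloop, if_pos rfl, CharTwo.add_self_eq_zero, hends, mul_zero]
    · rw [Finset.sum_pair hloop] at hends
      rcases hv with rfl | rfl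
      · rw [hinc, if_pos rfl, if_neg (Ne.symm hloop), add_zero, mul_one]
      · rw [hinc, if_neg hloop, if_pos rfl, zero_add, mul_one]
        exact (CharTwo.add_eq_zero.mp hends).symm
  · have hv' := hfiber v
    rw [filter_contractVertex_eq, if_neg hv, Finset.sum_singleton] at hv'
    rw [hinc, if_neg (by grind), if_neg (by grind), add_zero, mul_zero, hv']

theorem contractRestrict_single : contractRestrict e (Pi.single e 1) = 0 :=
  funext fun f => Pi.single_eq_of_ne f.2 _

theorem exists_contractRestrict_eq {y : (G.contract e).E → ZMod 2}
    (hy : y ∈ (G.contract e).cycleSpace) : ∃ x ∈ G.cycleSpace, contractRestrict e x = y := by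
  set x₀ : G.E → ZMod 2 := Function.extend Subtype.val y 0
  have hx₀ : contractRestrict e x₀ = y :=
    funext fun f => Subtype.val_injective.extend_apply y 0 f
  set z := G.incMatrix *ᵥ x₀
  have hz : fiberMatrix e *ᵥ z = 0 := by
    rw [← incMatrix_contract_mulVec, hx₀, ← mem_cycleSpace_iff]
    exact hy
  refine ⟨x₀ + z (G.fst e) • Pi.single e 1, ?_, ?_⟩
  · rw [mem_cycleSpace_iff, mulVec_add, mulVec_smul, mulVec_single_one]
    ext v
    simp only [Pi.add_apply, Pi.smul_apply, smul_eq_mul, Matrix.col_apply, Pi.zero_apply]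
    rw [← eq_mul_incMatrix_of_fiberMatrix_mulVec_eq_zero e hz v]
    exact CharTwo.add_self_eq_zero _
  · rw [map_add, map_smul, hx₀, contractRestrict_single, smul_zero, add_zero]

theorem map_contractRestrict_cycleSpace :
    G.cycleSpace.map (contractRestrict e) = (G.contract e).cycleSpace := by
  ext y
  constructor
  · rintro ⟨x, hx, rfl⟩
    exact contractRestrict_mem_cycleSpace e hx
  · intro hy
    obtain ⟨x, hx, rfl⟩ := exists_contractRestrict_eq e hy
    exact ⟨x, hx, rfl⟩

theorem charge_image_contractRestrict_le (B : Finset (G.E → ZMod 2)) (f : (G.contract e).E) :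
    (G.contract e).charge (B.image (contractRestrict e)) f ≤ G.charge B f.1 := by
  rw [charge, Finset.filter_image]
  exact Finset.card_image_le

end Contract

end Multigraph

theorem basisNum_contract_le_general (G : Multigraph) (e : G.E) :
    (G.contract e).basisNum ≤ G.basisNum := by
  set π := Multigraph.contractRestrict e
  obtain ⟨B, hB, hcharge⟩ := G.exists_isKBasis_basisNum
  have hspan : Submodule.span (ZMod 2) ↑(B.image π) = (G.contract e).cycleSpace := by
    rw [Finset.coe_image, Submodule.span_image, hB.2.2,
      Multigraph.map_contractRestrict_cycleSpace]
  obtain ⟨B', hB'B, hB'⟩ := Multigraph.exists_isCycleBasis_subset hspan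
  refine Multigraph.basisNum_le ⟨hB', fun f => ?_⟩
  calc (G.contract e).charge B' f
      ≤ (G.contract e).charge (B.image π) f := Multigraph.charge_mono hB'B f
    _ ≤ G.charge B f.1 := Multigraph.charge_image_contractRestrict_le e B f
    _ ≤ G.basisNum := hcharge f.1

/-- For any connected graph `G` and any edge `e` of `G`, the basis number of
the contraction `G/e` is at most the basis number of `G`. -/
theorem basisNum_contract_le (G : Multigraph) (hG : G.Connected) (e : G.E) :
    (G.contract e).basisNum ≤ G.basisNum :=
  basisNum_contract_le_general G e
end
end

section
/- If G' is obtained from a graph G by subdividing one edge, then b(G') = b(G). -/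
open scoped Classical

noncomputable section

/-!
Subdividing `e` does not change the cycle space up to the injective linear map
`x ↦ x ∘ π`, where `π` sends both halves of `e` back to `e` and every other edge to itself:
a cycle of the subdivision must use both halves or neither, since the new vertex has degree 2.
Bases transport along this map in both directions, since every basis of the subdivision lies
in its image; the charge of an edge of the subdivision is the charge of its image under `π`,
and `π` is onto, so the maximal charge is unchanged.
-/

namespace Multigraph

section Transport

variable {G H : Multigraph}

theorem isCycleBasis_image_iff {φ : (G.E → ZMod 2) →ₗ[ZMod 2] (H.E → ZMod 2)}
    (hφ : Function.Injective φ) (hC : G.cycleSpace.map φ = H.cycleSpace)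
    (B : Finset (G.E → ZMod 2)) :
    H.IsCycleBasis (B.image φ) ↔ G.IsCycleBasis B := by
  have hmem : ∀ x, φ x ∈ H.cycleSpace ↔ x ∈ G.cycleSpace := fun x => by
    rw [← hC, Submodule.mem_map]
    exact ⟨fun ⟨y, hy, hyx⟩ => hφ hyx ▸ hy, fun hx => ⟨x, hx, rfl⟩⟩
  have hindep : LinearIndepOn (ZMod 2) id (B.image φ : Set (H.E → ZMod 2)) ↔
      LinearIndepOn (ZMod 2) id (B : Set (G.E → ZMod 2)) := by
    rw [Finset.coe_image, ← linearIndepOn_iff_image hφ.injOn]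
    exact φ.linearIndepOn_iff_of_injOn (v := id) hφ.injOn
  have hspan : Submodule.span (ZMod 2) (B.image φ : Set (H.E → ZMod 2)) = H.cycleSpace ↔
      Submodule.span (ZMod 2) (B : Set _) = G.cycleSpace := by
    rw [Finset.coe_image, Submodule.span_image, ← hC,
      (Submodule.map_injective_of_injective hφ).eq_iff]
  simp only [IsCycleBasis, Finset.forall_mem_image, hmem]
  exact and_congr Iff.rfl (and_congr hindep hspan)

variable {π : H.E → G.E}

theorem charge_image_funLeft (hπ : Function.Surjective π) (B : Finset (G.E → ZMod 2))
    (f : H.E) : H.charge (B.image (LinearMap.funLeft (ZMod 2) (ZMod 2) π)) f =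
      G.charge B (π f) := by
  rw [charge, charge, Finset.filter_image,
    Finset.card_image_of_injective _ (LinearMap.funLeft_injective_of_surjective _ _ _ hπ)]
  rfl

theorem isKBasis_image_funLeft_iff (hπ : Function.Surjective π)
    (hC : G.cycleSpace.map (LinearMap.funLeft (ZMod 2) (ZMod 2) π) = H.cycleSpace)
    (k : ℕ) (B : Finset (G.E → ZMod 2)) :
    H.IsKBasis k (B.image (LinearMap.funLeft (ZMod 2) (ZMod 2) π)) ↔ G.IsKBasis k B := by
  simp only [IsKBasis, charge_image_funLeft hπ, hπ.forall (p := fun g => G.charge B g ≤ k),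
    isCycleBasis_image_iff (LinearMap.funLeft_injective_of_surjective _ _ _ hπ) hC]

theorem basisNum_eq_of_cycleSpace_map_funLeft (hπ : Function.Surjective π)
    (hC : G.cycleSpace.map (LinearMap.funLeft (ZMod 2) (ZMod 2) π) = H.cycleSpace) :
    H.basisNum = G.basisNum := by
  refine congrArg sInf (Set.ext fun k => ⟨?_, ?_⟩)
  · rintro ⟨B', hB'⟩
    have hB'C : (B' : Set _) ⊆ LinearMap.funLeft (ZMod 2) (ZMod 2) π '' G.cycleSpace := by
      rw [← Submodule.map_coe, hC]
      exact hB'.1.1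
    obtain ⟨B, -, rfl⟩ := Finset.subset_set_image_iff.mp hB'C
    exact ⟨B, (isKBasis_image_funLeft_iff hπ hC k B).mp hB'⟩
  · rintro ⟨B, hB⟩
    exact ⟨_, (isKBasis_image_funLeft_iff hπ hC k B).mpr hB⟩

end Transport

section Subdivide

variable (G : Multigraph) (e : G.E)

def subdivideProj : (G.subdivide e).E → G.E :=
  Sum.elim Subtype.val fun _ => e

theorem subdivideProj_surjective : Function.Surjective (G.subdivideProj e) := fun g =>
  if h : g = e then ⟨Sum.inr true, h.symm⟩ else ⟨Sum.inl ⟨g, h⟩, rfl⟩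

theorem sum_subdivide_edges {M : Type*} [AddCommMonoid M] (F : (G.subdivide e).E → M) :
    ∑ f, F f = ∑ f : {f : G.E // f ≠ e}, F (.inl f) + (F (.inr true) + F (.inr false)) := by
  rw [← Fintype.sum_bool (fun b => F (.inr b))]
  exact Fintype.sum_sum_type (α₁ := {f : G.E // f ≠ e}) (α₂ := Bool) F

variable {G e}

theorem inc_subdivide_some_inl (v : G.V) (f : {f : G.E // f ≠ e}) :
    (G.subdivide e).inc (some v) (.inl f) = G.inc v f := by
  simp [inc, subdivide]

theorem inc_subdivide_some_inr_add (v : G.V) :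
    (G.subdivide e).inc (some v) (.inr true) + (G.subdivide e).inc (some v) (.inr false) =
      G.inc v e := by
  simp [inc, subdivide]

theorem inc_subdivide_none_inl (f : {f : G.E // f ≠ e}) :
    (G.subdivide e).inc none (.inl f) = 0 := by
  simp [inc, subdivide]

theorem inc_subdivide_none_inr (b : Bool) : (G.subdivide e).inc none (.inr b) = 1 := by
  cases b <;> simp [inc, subdivide]

theorem sum_inc_subdivide_some (x : G.E → ZMod 2) (v : G.V) :
    ∑ f, (G.subdivide e).inc (some v) f * x (G.subdivideProj e f) = ∑ g, G.inc v g * x g := by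
  rw [sum_subdivide_edges, Fintype.sum_eq_add_sum_subtype_ne _ e, add_comm]
  simp only [subdivideProj, Sum.elim_inl, Sum.elim_inr, inc_subdivide_some_inl, ← add_mul,
    inc_subdivide_some_inr_add]

theorem sum_inc_subdivide_none (y : (G.subdivide e).E → ZMod 2) :
    ∑ f, (G.subdivide e).inc none f * y f = y (.inr true) + y (.inr false) := by
  simp only [sum_subdivide_edges, inc_subdivide_none_inl, inc_subdivide_none_inr, zero_mul,
    one_mul, Finset.sum_const_zero, zero_add]

theorem cycleSpace_map_subdivide :
    G.cycleSpace.map (LinearMap.funLeft (ZMod 2) (ZMod 2) (G.subdivideProj e)) =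
      (G.subdivide e).cycleSpace := by
  ext y
  constructor
  · rintro ⟨x, hx, rfl⟩ (_ | v)
    · exact (sum_inc_subdivide_none _).trans (CharTwo.add_self_eq_zero (x e))
    · exact (sum_inc_subdivide_some x v).trans (hx v)
  · intro hy
    have hhalves : y (.inr true) = y (.inr false) :=
      CharTwo.add_eq_zero.mp ((sum_inc_subdivide_none y).symm.trans (hy none))
    let x : G.E → ZMod 2 := fun g => if h : g = e then y (.inr true) else y (.inl ⟨g, h⟩)
    have hxy : LinearMap.funLeft (ZMod 2) (ZMod 2) (G.subdivideProj e) x = y := by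
      funext f
      rcases f with f | (_ | _)
      · exact dif_neg f.2
      · exact (dif_pos rfl).trans hhalves
      · exact dif_pos rfl
    refine ⟨x, fun v => ?_, hxy⟩
    rw [← sum_inc_subdivide_some]
    exact hxy ▸ hy (some v)

end Subdivide

end Multigraph

/-- If `G'` is obtained from a graph `G` by subdividing one edge, then
`b(G') = b(G)`. -/
theorem basisNum_subdivide (G : Multigraph) (e : G.E) :
    (G.subdivide e).basisNum = G.basisNum :=
  Multigraph.basisNum_eq_of_cycleSpace_map_funLeft (G.subdivideProj_surjective e)
    Multigraph.cycleSpace_map_subdivide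
end
end

section
/- Let K_4 be drawn in the plane with exactly one crossing x, and let C be the 4-cycle surrounding x (the four uncrossed edges). For any assignment of the multiset {1,1,2,2} to the four edges of C, there exists a basis of the cycle space of K_4 (consisting of three cycles) such that each edge of C has charge at most its assigned number and the two crossing edges have charge at most 3. -/
open scoped Classical

noncomputable section

/-- The complete graph `K₄` with vertices `u₀, u₁, u₂, u₃`. -/
noncomputable abbrev K4 : Multigraph where
  V := Fin 4
  E := {p : Fin 4 × Fin 4 // p.1 < p.2}
  fintV := inferInstance
  fintE := inferInstance
  fst := fun p => p.1.1
  snd := fun p => p.1.2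

/-- The edges of the 4-cycle `u₀-u₁-u₂-u₃-u₀` surrounding the crossing when `K₄` is drawn with
the chords `u₀u₂` and `u₁u₃` crossing. -/
noncomputable def cycleEdge : Fin 4 → K4.E :=
  ![⟨(0, 1), by decide⟩, ⟨(1, 2), by decide⟩, ⟨(2, 3), by decide⟩, ⟨(0, 3), by decide⟩]

/-!
Every triangle of `K₄` consists of two consecutive edges of `C` and one chord. If the two
edges of weight 1 are adjacent, the three triangles other than the one containing both of
them form a basis with the required charges. If they are opposite, take the 4-cycle through
both chords that avoids them, together with the two triangles through one chord. Since the
cycle space has dimension 3, checking a candidate basis amounts to checking that no nonempty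
subset of it sums to zero, a finite computation.
-/

theorem linearIndependent_of_subset_sum_ne_zero {M : Type*} [AddCommGroup M]
    [Module (ZMod 2) M] {B : Finset M} (hB : ∀ T ⊆ B, T ≠ ∅ → ∑ x ∈ T, x ≠ 0) :
    LinearIndependent (ZMod 2) (fun x : B => (x : M)) := by
  show LinearIndepOn (ZMod 2) id (B : Set M)
  refine linearIndepOn_finset_iff.2 fun f hf x hx => ?_
  by_contra hfx
  refine hB (B.filter (f · ≠ 0)) (Finset.filter_subset _ _)
    (Finset.ne_empty_of_mem (a := x) (by simp [hx, hfx])) ?_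
  rw [← hf, Finset.sum_filter]
  refine Finset.sum_congr rfl fun y _ => ?_
  obtain h | h : f y = 0 ∨ f y = 1 := by generalize f y = a; decide +revert
  all_goals simp [h]

namespace Multigraph

theorem isCycleBasis_of_linearIndependent {G : Multigraph} {B : Finset (G.E → ZMod 2)}
    (hmem : ∀ x ∈ B, x ∈ G.cycleSpace)
    (hli : LinearIndependent (ZMod 2) (fun x : B => (x : G.E → ZMod 2)))
    (hcard : B.card = Module.finrank (ZMod 2) G.cycleSpace) : G.IsCycleBasis B := by
  refine ⟨hmem, hli, Submodule.eq_of_le_of_finrank_eq (Submodule.span_le.2 hmem) ?_⟩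
  rw [finrank_span_finset_eq_card hli, hcard]

end Multigraph

namespace K4

/-- `Multigraph.inc` is elaborated with classical `Decidable` instances, so `decide` can only
evaluate membership in the cycle space in this form. -/
theorem mem_cycleSpace_iff (x : K4.E → ZMod 2) :
    x ∈ K4.cycleSpace ↔ ∀ v : Fin 4,
      ∑ e : K4.E, ((if e.1.1 = v then 1 else 0) + (if e.1.2 = v then 1 else 0)) * x e = 0 := by
  show (∀ v : K4.V, ∑ e : K4.E, K4.inc v e * x e = 0) ↔ _
  unfold Multigraph.inc
  congr!

def triangleOpposite (v : Fin 4) : K4.E → ZMod 2 :=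
  fun e => if e.1.1 ≠ v ∧ e.1.2 ≠ v then 1 else 0

theorem triangleOpposite_mem_cycleSpace (v : Fin 4) : triangleOpposite v ∈ K4.cycleSpace := by
  rw [mem_cycleSpace_iff]
  revert v
  decide

/-- An even subgraph is determined by its edges off the spanning star at `u₀`, and each of
those lies in exactly one triangle through `u₀`. -/
theorem eq_sum_triangleOpposite {x : K4.E → ZMod 2} (hx : x ∈ K4.cycleSpace) :
    x = x ⟨(1, 2), by decide⟩ • triangleOpposite 3 + x ⟨(1, 3), by decide⟩ • triangleOpposite 2 +
      x ⟨(2, 3), by decide⟩ • triangleOpposite 1 := by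
  rw [mem_cycleSpace_iff] at hx
  revert x
  decide

theorem finrank_cycleSpace : Module.finrank (ZMod 2) K4.cycleSpace = 3 := by
  set B : Finset (K4.E → ZMod 2) := {triangleOpposite 3, triangleOpposite 2, triangleOpposite 1}
  have hli : LinearIndependent (ZMod 2) (fun x : B => (x : K4.E → ZMod 2)) :=
    linearIndependent_of_subset_sum_ne_zero (by decide)
  have hspan : Submodule.span (ZMod 2) (B : Set (K4.E → ZMod 2)) = K4.cycleSpace := by
    refine le_antisymm (Submodule.span_le.2 ?_) fun x hx => ?_
    · simp only [B, Finset.coe_insert, Finset.coe_singleton, Set.insert_subset_iff,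
        Set.singleton_subset_iff, SetLike.mem_coe]
      exact ⟨triangleOpposite_mem_cycleSpace 3, triangleOpposite_mem_cycleSpace 2,
        triangleOpposite_mem_cycleSpace 1⟩
    · rw [eq_sum_triangleOpposite hx]
      refine add_mem (add_mem ?_ ?_) ?_ <;>
        exact Submodule.smul_mem _ _ (Submodule.subset_span (by simp [B]))
  rw [← hspan, finrank_span_finset_eq_card hli]
  decide

def chargeBasis : Fin 6 → Finset (K4.E → ZMod 2) :=
  ![{triangleOpposite 1, triangleOpposite 2, triangleOpposite 3},
    {triangleOpposite 0, triangleOpposite 2, triangleOpposite 3},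
    {triangleOpposite 0, triangleOpposite 1, triangleOpposite 3},
    {triangleOpposite 0, triangleOpposite 1, triangleOpposite 2},
    {triangleOpposite 2 + triangleOpposite 3, triangleOpposite 1, triangleOpposite 3},
    {triangleOpposite 0 + triangleOpposite 3, triangleOpposite 0, triangleOpposite 2}]

theorem isCycleBasis_chargeBasis (k : Fin 6) :
    K4.IsCycleBasis (chargeBasis k) ∧ (chargeBasis k).card = 3 := by
  have heven : ∀ j, ∀ x ∈ chargeBasis j, ∀ v : Fin 4,
      ∑ e : K4.E, ((if e.1.1 = v then 1 else 0) + (if e.1.2 = v then 1 else 0)) * x e = 0 := by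
    decide
  have hsum : ∀ j, ∀ T ⊆ chargeBasis j, T ≠ ∅ → ∑ x ∈ T, x ≠ 0 := by
    decide
  have hcard : ∀ j, (chargeBasis j).card = 3 := by
    decide
  refine ⟨Multigraph.isCycleBasis_of_linearIndependent (fun x hx => (mem_cycleSpace_iff x).2
    (heven k x hx)) (linearIndependent_of_subset_sum_ne_zero (hsum k)) ?_, hcard k⟩
  rw [hcard, finrank_cycleSpace]

theorem exists_chargeBasis (S : Finset (Fin 4)) (hS : S.card = 2) :
    ∃ k, ∀ i, K4.charge (chargeBasis k) (cycleEdge i) ≤ if i ∈ S then 1 else 2 := by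
  revert S
  decide

end K4

/-- Let `K₄` be drawn in the plane with exactly one crossing `x` (of the
chords `u₀u₂` and `u₁u₃`), and let `C` be the 4-cycle surrounding `x`.  For any assignment `w`
of the multiset `{1,1,2,2}` to the four edges of `C`, there is a basis of the cycle space of
`K₄` consisting of three cycles such that each edge of `C` has charge at most its assigned
number and the two crossing edges have charge at most 3. -/
theorem K4_basis_with_charges (w : Fin 4 → ℕ)
    (hw12 : ∀ i, w i = 1 ∨ w i = 2)
    (hw : (Finset.univ.filter fun i => w i = 1).card = 2) :
    ∃ B : Finset (K4.E → ZMod 2),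
      K4.IsCycleBasis B ∧ B.card = 3 ∧
      (∀ i : Fin 4, K4.charge B (cycleEdge i) ≤ w i) ∧
      K4.charge B ⟨(0, 2), by decide⟩ ≤ 3 ∧
      K4.charge B ⟨(1, 3), by decide⟩ ≤ 3 := by
  obtain ⟨k, hcharge⟩ := K4.exists_chargeBasis _ hw
  obtain ⟨hbasis, hcard⟩ := K4.isCycleBasis_chargeBasis k
  have hcharge_le_card : ∀ e, K4.charge (K4.chargeBasis k) e ≤ 3 :=
    fun e => hcard ▸ Finset.card_filter_le _ _
  refine ⟨_, hbasis, hcard, fun i => (hcharge i).trans ?_, hcharge_le_card _,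
    hcharge_le_card _⟩
  split_ifs with hi
  · exact (Finset.mem_filter.1 hi).2.ge
  · have := hw12 i
    simp only [Finset.mem_filter, Finset.mem_univ, true_and] at hi
    omega
end
end
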